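/- (Three-head two-position-error correction.) Let t_1 ≥ 2 and t = 3t_1 − 2. Let c, c' ∈ C_3(n,≤2,t_1). Let 1 ≤ i_1 < i_2 with i_2 + 2t ≤ n and 1 ≤ i_1' < i_2' with i_2' + 2t ≤ n, and let e_1, e_2, e_1', e_2' ∈ {deletion, sticky insertion} be error types. For 0 ≤ k ≤ 2, let y_k denote the vector obtained from c by applying, for j = 1, 2, the error e_j at position i_j + k·t (deleting the coordinate at that position if e_j is a deletion, and inserting an extra copy of the coordinate at that position immediately after it if e_j is a sticky insertion), and let y_k' denote the vector obtained analogously from c' using error types e_1', e_2' at positions i_1' + k·t, i_2' + k·t. If y_k = y_k' for all k = 0, 1, 2, then c = c'. (Thus C_3(n,≤2,t_1) is a three-head two-position-error-correcting code when the distance between adjacent heads is at least t = 3t_1 − 2.) -/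
import Mathlib


/-- `c` has a contiguous subvector of length `len` with period `ℓ`
(0-indexed starting position `s`). -/
def HasPeriodicSub {n : ℕ} (c : Fin n → ZMod 2) (ℓ len : ℕ) : Prop :=
  ∃ s : ℕ, ∃ _h : s + len ≤ n,
    ∀ j : ℕ, (hj : j + ℓ + 1 ≤ len) →
      c ⟨s + j, by omega⟩ = c ⟨s + j + ℓ, by omega⟩

/-- `L(c,ℓ) ≤ t`: every contiguous subvector of `c` with period `ℓ` has length at most `t`. -/
def LLe {n : ℕ} (c : Fin n → ZMod 2) (ℓ t : ℕ) : Prop :=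
  ∀ len : ℕ, HasPeriodicSub c ℓ len → len ≤ t

/-- The code `C_3(n,≤b,t) = {c ∈ F_2^n : L(c,ℓ) ≤ t for all 1 ≤ ℓ ≤ b}`. -/
def C3set (n b t : ℕ) : Set (Fin n → ZMod 2) :=
  {c | ∀ ℓ : ℕ, 1 ≤ ℓ → ℓ ≤ b → LLe c ℓ t}

/-- Apply two position errors to `c`, at the (1-indexed) positions `p₁` and `p₂`
of the original vector: error type `true` means deletion of that coordinate,
`false` means sticky insertion (an extra copy of the coordinate is inserted
immediately after it). -/
def applyTwoErrors {n : ℕ} (c : Fin n → ZMod 2) (p1 p2 : ℕ) (e1 e2 : Bool) :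
    List (ZMod 2) :=
  (List.finRange n).flatMap (fun k =>
    if k.val + 1 = p1 then (if e1 then [] else [c k, c k])
    else if k.val + 1 = p2 then (if e2 then [] else [c k, c k])
    else [c k])

def cExt {n : ℕ} (c : Fin n → ZMod 2) (j : ℕ) : ZMod 2 :=
  if h : j < n then c ⟨j, h⟩ else 0

def Gmap (q1 q2 l1 l2 m : ℕ) : ℕ :=
  if m + l1 ≤ q1 then m
  else if m + 2*l1 + l2 ≤ q2 + 1 then m + 2*l1 - 1
  else m + 2*l1 + 2*l2 - 2

def bl (b : Bool) : ℕ := if b then 1 else 0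

lemma Gmap_P {q1 q2 l1 l2 m : ℕ} (h : m + l1 ≤ q1) : Gmap q1 q2 l1 l2 m = m := by
  unfold Gmap; rw [if_pos h]

lemma Gmap_M {q1 q2 l1 l2 m : ℕ} (h1 : q1 < m + l1) (h2 : m + 2*l1 + l2 ≤ q2 + 1) :
    Gmap q1 q2 l1 l2 m = m + 2*l1 - 1 := by
  unfold Gmap; rw [if_neg (by omega), if_pos h2]

lemma Gmap_S {q1 q2 l1 l2 m : ℕ} (h1 : q1 < m + l1) (h2 : q2 + 1 < m + 2*l1 + l2) :
    Gmap q1 q2 l1 l2 m = m + 2*l1 + 2*l2 - 2 := by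
  unfold Gmap; rw [if_neg (by omega), if_neg (by omega)]

lemma flatMap_finRange {α : Type*} : ∀ (nn : ℕ) (F : Fin nn → List α),
    (List.finRange nn).flatMap F
      = (List.range nn).flatMap (fun k => if h : k < nn then F ⟨k, h⟩ else []) := by
  intro nn
  induction nn with
  | zero => intro F; simp
  | succ m ih =>
    intro F
    rw [List.finRange_succ_last, List.range_succ]
    simp only [List.flatMap_append, List.flatMap_map, List.flatMap_singleton]
    rw [ih (fun i => F i.castSucc)]
    congr 1
    · apply List.flatMap_congr
      intro x hx
      rw [List.mem_range] at hx
      rw [dif_pos hx, dif_pos (by omega : x < m + 1)]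
      rfl
    · simp [Fin.last]

lemma flatMap_range_split {α : Type*} (N a : ℕ) (h : a ≤ N) (g : ℕ → List α) :
    (List.range N).flatMap g
      = (List.range a).flatMap g ++ (List.range (N-a)).flatMap (fun k => g (a+k)) := by
  conv_lhs => rw [show N = a + (N-a) by omega, List.range_add]
  rw [List.flatMap_append, List.flatMap_map]

lemma flatMap_sing {α β : Type*} (l : List α) (f : α → β) :
    l.flatMap (fun k => [f k]) = l.map f := by
  induction l with
  | nil => rfl
  | cons a l ih => simp [ih]

lemma range_one_flatMap {α : Type*} (g : ℕ → List α) : (List.range 1).flatMap g = g 0 := by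
  rw [show List.range 1 = [0] by simp [List.range_succ]]
  simp

lemma core_split (n q1 q2 l1 l2 : ℕ) (d : ℕ → ZMod 2) (b1 b2 : List (ZMod 2))
    (hl1 : l1 ≤ 1) (hl2 : l2 ≤ 1) (hq : q1 < q2) (hn : q2 < n)
    (hb1 : b1 = (List.range (2-2*l1)).map (fun _ => d q1))
    (hb2 : b2 = (List.range (2-2*l2)).map (fun _ => d q2)) :
    (List.range n).flatMap
        (fun k => if k = q1 then b1 else if k = q2 then b2 else [d k])
      = (List.range (n+2-2*l1-2*l2)).map (fun m => d (Gmap q1 q2 l1 l2 m)) := by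
  set g := fun k => if k = q1 then b1 else if k = q2 then b2 else [d k] with hg
  rw [flatMap_range_split n q1 (by omega) g]
  rw [flatMap_range_split (n - q1) 1 (by omega) _]
  rw [flatMap_range_split (n - q1 - 1) (q2 - q1 - 1) (by omega) _]
  rw [flatMap_range_split (n - q1 - 1 - (q2 - q1 - 1)) 1 (by omega) _]
  rw [range_one_flatMap, range_one_flatMap]
  conv_rhs => rw [show n + 2 - 2*l1 - 2*l2
      = q1 + ((2 - 2*l1) + ((q2 - q1 - 1) + ((2 - 2*l2) + (n - q2 - 1)))) by omega]
  rw [List.range_add, List.map_append, List.map_map, List.range_add, List.map_append,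
    List.map_map, List.range_add, List.map_append, List.map_map, List.range_add,
    List.map_append, List.map_map]
  congr 1
  · have hcongr : (List.range q1).flatMap g = (List.range q1).flatMap (fun k => [d k]) := by
      apply List.flatMap_congr
      intro k hk
      rw [List.mem_range] at hk
      simp only [hg]
      rw [if_neg (by omega), if_neg (by omega)]
    rw [hcongr, flatMap_sing]
    apply List.map_congr_left
    intro k hk
    rw [List.mem_range] at hk
    try simp only [Function.comp]
    congr 1
    unfold Gmap
    split_ifs <;> omega
  congr 1
  · have : g (q1 + 0) = b1 := by simp [hg]
    rw [this, hb1]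
    apply List.map_congr_left
    intro k hk
    rw [List.mem_range] at hk
    try simp only [Function.comp]
    congr 1
    unfold Gmap
    split_ifs <;> omega
  congr 1
  · have hcongr : (List.range (q2-q1-1)).flatMap (fun k => g (q1 + (1 + k)))
        = (List.range (q2-q1-1)).flatMap (fun k => [d (q1+1+k)]) := by
      apply List.flatMap_congr
      intro k hk
      rw [List.mem_range] at hk
      simp only [hg]
      rw [if_neg (by omega), if_neg (by omega)]
      congr 2
      omega
    rw [hcongr, flatMap_sing]
    apply List.map_congr_left
    intro k hk
    rw [List.mem_range] at hk
    try simp only [Function.comp]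
    congr 1
    unfold Gmap
    split_ifs <;> omega
  congr 1
  · have : g (q1 + (1 + (q2 - q1 - 1 + 0))) = b2 := by
      simp only [hg]
      rw [if_neg (by omega), if_pos (by omega)]
    rw [this, hb2]
    apply List.map_congr_left
    intro k hk
    rw [List.mem_range] at hk
    try simp only [Function.comp]
    congr 1
    unfold Gmap
    split_ifs <;> omega
  · have hcongr : (List.range (n - q1 - 1 - (q2-q1-1) - 1)).flatMap
          (fun k => g (q1 + (1 + (q2 - q1 - 1 + (1 + k)))))
        = (List.range (n - q1 - 1 - (q2-q1-1) - 1)).flatMap (fun k => [d (q2+1+k)]) := by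
      apply List.flatMap_congr
      intro k hk
      rw [List.mem_range] at hk
      simp only [hg]
      rw [if_neg (by omega), if_neg (by omega)]
      congr 2
      omega
    rw [hcongr, flatMap_sing,
      show n - q1 - 1 - (q2-q1-1) - 1 = n - q2 - 1 by omega]
    apply List.map_congr_left
    intro k hk
    rw [List.mem_range] at hk
    try simp only [Function.comp]
    congr 1
    unfold Gmap
    split_ifs <;> omega

lemma applyTwoErrors_eq {n : ℕ} (c : Fin n → ZMod 2) (p1 p2 : ℕ) (e1 e2 : Bool)
    (h1 : 1 ≤ p1) (h12 : p1 < p2) (h2n : p2 ≤ n) :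
    applyTwoErrors c p1 p2 e1 e2 =
      (List.range (n + 2 - 2*(bl e1) - 2*(bl e2))).map
        (fun m => cExt c (Gmap (p1-1) (p2-1) (bl e1) (bl e2) m)) := by
  have key : applyTwoErrors c p1 p2 e1 e2 = (List.range n).flatMap
      (fun k => if k = p1 - 1 then (if e1 then [] else [cExt c (p1-1), cExt c (p1-1)])
        else if k = p2 - 1 then (if e2 then [] else [cExt c (p2-1), cExt c (p2-1)])
        else [cExt c k]) := by
    unfold applyTwoErrors
    rw [flatMap_finRange]
    apply List.flatMap_congr
    intro k hk
    rw [List.mem_range] at hk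
    rw [dif_pos hk]
    have hval : ((⟨k, hk⟩ : Fin n) : ℕ) = k := rfl
    by_cases hk1 : k + 1 = p1
    · rw [if_pos (by rw [hval]; exact hk1), if_pos (by omega : k = p1 - 1)]
      have : cExt c (p1 - 1) = c ⟨k, hk⟩ := by
        rw [show p1 - 1 = k by omega]
        simp [cExt, dif_pos hk]
      rw [this]
    · rw [if_neg (by rw [hval]; exact hk1), if_neg (by omega : ¬ (k = p1 - 1))]
      by_cases hk2 : k + 1 = p2
      · rw [if_pos (by rw [hval]; exact hk2), if_pos (by omega : k = p2 - 1)]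
        have : cExt c (p2 - 1) = c ⟨k, hk⟩ := by
          rw [show p2 - 1 = k by omega]
          simp [cExt, dif_pos hk]
        rw [this]
      · rw [if_neg (by rw [hval]; exact hk2), if_neg (by omega : ¬ (k = p2 - 1))]
        simp [cExt, dif_pos hk]
  rw [key]
  apply core_split
  · cases e1 <;> simp [bl]
  · cases e2 <;> simp [bl]
  · omega
  · omega
  · cases e1 <;> simp [bl, List.range_succ]
  · cases e2 <;> simp [bl, List.range_succ]

-- chunk 2: period-run and zone lemmas (tested on top of a.lean contents)
section Runs

lemma run1_false {n t1 : ℕ} {c : Fin n → ZMod 2}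
    (hL : LLe c 1 t1) (p : ℕ)
    (hn : p + t1 + 1 ≤ n) (hr : ∀ i, p ≤ i → i < p + t1 → cExt c i = cExt c (i+1)) :
    False := by
  have hps : HasPeriodicSub c 1 (t1+1) := by
    refine ⟨p, by omega, ?_⟩
    intro j hj
    have h2 := hr (p+j) (by omega) (by omega)
    unfold cExt at h2
    rw [dif_pos (show p+j < n by omega), dif_pos (show p+j+1 < n by omega)] at h2
    exact h2
  have := hL (t1+1) hps
  omega

lemma run2_false {n t1 : ℕ} {c : Fin n → ZMod 2}
    (hL : LLe c 2 t1) (p : ℕ) (ht1 : 2 ≤ t1)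
    (hn : p + t1 + 1 ≤ n) (hr : ∀ i, p ≤ i → i + 2 < p + t1 + 1 → cExt c i = cExt c (i+2)) :
    False := by
  have hps : HasPeriodicSub c 2 (t1+1) := by
    refine ⟨p, by omega, ?_⟩
    intro j hj
    have h2 := hr (p+j) (by omega) (by omega)
    unfold cExt at h2
    rw [dif_pos (show p+j < n by omega), dif_pos (show p+j+2 < n by omega)] at h2
    exact h2
  have := hL (t1+1) hps
  omega

end Runs

section Zones

variable {n t1 X : ℕ} {c c' : Fin n → ZMod 2}

/-- relation `c j = c' (j+e)` on `[p,q]`, `q < X`, long enough : contradiction. -/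
lemma LSZpos (hb : ∀ j, j < X → cExt c j = cExt c' j)
    (hc1' : LLe c' 1 t1) (hc2' : LLe c' 2 t1) (ht1 : 2 ≤ t1) (hXn : X + t1 + 3 ≤ n)
    (e p q : ℕ) (he1 : 1 ≤ e) (he2 : e ≤ 2) (hq : q < X) (hcnt : p + t1 ≤ q + e)
    (h : ∀ j, p ≤ j → j ≤ q → cExt c j = cExt c' (j + e)) : False := by
  have heq : ∀ j, p ≤ j → j ≤ q → cExt c' j = cExt c' (j+e) := by
    intro j h1 h2
    rw [← hb j (by omega)]
    exact h j h1 h2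
  rcases (by omega : e = 1 ∨ e = 2) with rfl | rfl
  · exact run1_false hc1' p (by omega) (fun i hi1 hi2 => heq i hi1 (by omega))
  · exact run2_false hc2' p ht1 (by omega) (fun i hi1 hi2 => heq i hi1 (by omega))

/-- relation `c j = c' (j-e)` on `[p,q]`, `q ≤ X`, long enough : contradiction. -/
lemma LSZneg (hb : ∀ j, j < X → cExt c j = cExt c' j)
    (hc1 : LLe c 1 t1) (hc2 : LLe c 2 t1) (ht1 : 2 ≤ t1) (hXn : X + t1 + 3 ≤ n)
    (e p q : ℕ) (he1 : 1 ≤ e) (he2 : e ≤ 2) (hq : q ≤ X) (hp : e ≤ p) (hcnt : p + t1 ≤ q + e)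
    (h : ∀ j, p ≤ j → j ≤ q → cExt c j = cExt c' (j - e)) : False := by
  have heq : ∀ j, p ≤ j → j ≤ q → cExt c j = cExt c (j - e) := by
    intro j h1 h2
    rw [h j h1 h2]
    exact (hb (j-e) (by omega)).symm
  rcases (by omega : e = 1 ∨ e = 2) with rfl | rfl
  · refine run1_false hc1 (p-1) (by omega) (fun i hi1 hi2 => ?_)
    have h3 := heq (i+1) (by omega) (by omega)
    rw [show i+1-1 = i by omega] at h3
    exact h3.symm
  · refine run2_false hc2 (p-2) ht1 (by omega) (fun i hi1 hi2 => ?_)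
    have h3 := heq (i+2) (by omega) (by omega)
    rw [show i+2-2 = i by omega] at h3
    exact h3.symm

/-- relation `c (j+e) = c' j` on `[p,q]`, `q < X` : c-period run. -/
lemma LSZposR (hb : ∀ j, j < X → cExt c j = cExt c' j)
    (hc1 : LLe c 1 t1) (hc2 : LLe c 2 t1) (ht1 : 2 ≤ t1) (hXn : X + t1 + 3 ≤ n)
    (e p q : ℕ) (he1 : 1 ≤ e) (he2 : e ≤ 2) (hq : q < X) (hcnt : p + t1 ≤ q + e)
    (h : ∀ j, p ≤ j → j ≤ q → cExt c (j + e) = cExt c' j) : False := by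
  have heq : ∀ j, p ≤ j → j ≤ q → cExt c j = cExt c (j+e) := by
    intro j h1 h2
    rw [h j h1 h2]
    exact hb j (by omega)
  rcases (by omega : e = 1 ∨ e = 2) with rfl | rfl
  · exact run1_false hc1 p (by omega) (fun i hi1 hi2 => heq i hi1 (by omega))
  · exact run2_false hc2 p ht1 (by omega) (fun i hi1 hi2 => heq i hi1 (by omega))

/-- relation `c (j-e) = c' j` on `[p,q]`, `q ≤ X` : c'-period run. -/
lemma LSZnegR (hb : ∀ j, j < X → cExt c j = cExt c' j)
    (hc1' : LLe c' 1 t1) (hc2' : LLe c' 2 t1) (ht1 : 2 ≤ t1) (hXn : X + t1 + 3 ≤ n)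
    (e p q : ℕ) (he1 : 1 ≤ e) (he2 : e ≤ 2) (hq : q ≤ X) (hp : e ≤ p) (hcnt : p + t1 ≤ q + e)
    (h : ∀ j, p ≤ j → j ≤ q → cExt c (j - e) = cExt c' j) : False := by
  have heq : ∀ j, p ≤ j → j ≤ q → cExt c' (j-e) = cExt c' j := by
    intro j h1 h2
    rw [← h j h1 h2]
    exact (hb (j-e) (by omega)).symm
  rcases (by omega : e = 1 ∨ e = 2) with rfl | rfl
  · refine run1_false hc1' (p-1) (by omega) (fun i hi1 hi2 => ?_)
    have h3 := heq (i+1) (by omega) (by omega)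
    rw [show i+1-1 = i by omega] at h3
    exact h3
  · refine run2_false hc2' (p-2) ht1 (by omega) (fun i hi1 hi2 => ?_)
    have h3 := heq (i+2) (by omega) (by omega)
    rw [show i+2-2 = i by omega] at h3
    exact h3

end Zones

section Regions

variable {n t1 X : ℕ} {c c' : Fin n → ZMod 2} {l1 l2 l1' l2' : ℕ}

/-- read with c-Middle covering the window `[X-t1,X]` and c'-Prefix covering
its m-window : contradiction. -/
lemma ANMP (hb : ∀ j, j < X → cExt c j = cExt c' j) (hX : cExt c X ≠ cExt c' X)
    (hc1 : LLe c 1 t1) (hc2 : LLe c 2 t1) (hc1' : LLe c' 1 t1) (hc2' : LLe c' 2 t1)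
    (ht1 : 2 ≤ t1) (hXw : t1 + 5 ≤ X) (hXn : X + t1 + 3 ≤ n)
    (hl1 : l1 ≤ 1) (hl2 : l2 ≤ 1) (hl1' : l1' ≤ 1) (hl2' : l2' ≤ 1)
    (a b a' b' : ℕ)
    (mkr : ∀ m, m ≤ X + 3 → cExt c (Gmap a b l1 l2 m) = cExt c' (Gmap a' b' l1' l2' m))
    (hcM1 : a + l1 + t1 ≤ X) (hcM2 : X + l2 ≤ b)
    (hcP : X + 1 + l1' ≤ a' + 2*l1) : False := by
  rcases (by omega : l1 = 0 ∨ l1 = 1) with rfl | rfl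
  · refine LSZpos hb hc1' hc2' ht1 hXn 1 (X-t1) (X-1) (by omega) (by omega) (by omega)
      (by omega) ?_
    intro j h1 h2
    have hm := mkr (j+1) (by omega)
    rw [Gmap_M (by omega) (by omega), Gmap_P (by omega)] at hm
    rw [show j+1+2*0-1 = j by omega] at hm
    exact hm
  · refine LSZneg hb hc1 hc2 ht1 hXn 1 (X-t1) X (by omega) (by omega) (by omega)
      (by omega) (by omega) ?_
    intro j h1 h2
    have hm := mkr (j-1) (by omega)
    rw [Gmap_M (by omega) (by omega), Gmap_P (by omega)] at hm
    rw [show j-1+2*1-1 = j by omega] at hm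
    exact hm

/-- read with c-Suffix covering the window and c'-Prefix covering its m-window. -/
lemma ANSP (hb : ∀ j, j < X → cExt c j = cExt c' j) (hX : cExt c X ≠ cExt c' X)
    (hc1 : LLe c 1 t1) (hc2 : LLe c 2 t1) (hc1' : LLe c' 1 t1) (hc2' : LLe c' 2 t1)
    (ht1 : 2 ≤ t1) (hXw : t1 + 5 ≤ X) (hXn : X + t1 + 3 ≤ n)
    (hl1 : l1 ≤ 1) (hl2 : l2 ≤ 1) (hl1' : l1' ≤ 1) (hl2' : l2' ≤ 1)
    (a b a' b' : ℕ) (hab : a < b)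
    (mkr : ∀ m, m ≤ X + 3 → cExt c (Gmap a b l1 l2 m) = cExt c' (Gmap a' b' l1' l2' m))
    (hcS : b + l2 + t1 ≤ X)
    (hcP2 : X + 2 + l1' ≤ a' + 2*l1 + 2*l2) : False := by
  have hrel : ∀ j, X-t1 ≤ j → j ≤ X → cExt c j = cExt c' (j+2-2*l1-2*l2) := by
    intro j h1 h2
    have hm := mkr (j+2-2*l1-2*l2) (by omega)
    rw [Gmap_S (by omega) (by omega), Gmap_P (by omega)] at hm
    rw [show j+2-2*l1-2*l2+2*l1+2*l2-2 = j by omega] at hm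
    exact hm
  rcases (by omega : l1+l2 = 0 ∨ l1+l2 = 1 ∨ l1+l2 = 2) with hL | hL | hL
  · refine LSZpos hb hc1' hc2' ht1 hXn 2 (X-t1) (X-1) (by omega) (by omega) (by omega)
      (by omega) ?_
    intro j h1 h2
    have := hrel j (by omega) (by omega)
    rwa [show j+2-2*l1-2*l2 = j+2 by omega] at this
  · apply hX
    have := hrel X (by omega) (le_refl X)
    rwa [show X+2-2*l1-2*l2 = X by omega] at this
  · refine LSZneg hb hc1 hc2 ht1 hXn 2 (X-t1) X (by omega) (by omega) (by omega)
      (by omega) (by omega) ?_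
    intro j h1 h2
    have := hrel j h1 h2
    rwa [show j+2-2*l1-2*l2 = j-2 by omega] at this

/-- read with c-Middle covering the window and c'-Middle covering its m-window. -/
lemma ANMM (hb : ∀ j, j < X → cExt c j = cExt c' j) (hX : cExt c X ≠ cExt c' X)
    (hc1 : LLe c 1 t1) (hc2 : LLe c 2 t1) (hc1' : LLe c' 1 t1) (hc2' : LLe c' 2 t1)
    (ht1 : 2 ≤ t1) (hXw : t1 + 5 ≤ X) (hXn : X + t1 + 3 ≤ n)
    (hl1 : l1 ≤ 1) (hl2 : l2 ≤ 1) (hl1' : l1' ≤ 1) (hl2' : l2' ≤ 1)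
    (a b a' b' : ℕ)
    (mkr : ∀ m, m ≤ X + 3 → cExt c (Gmap a b l1 l2 m) = cExt c' (Gmap a' b' l1' l2' m))
    (hcM1 : a + l1 + t1 ≤ X) (hcM2 : X + l2 ≤ b)
    (hcM1' : a' + 2*l1 + t1 ≤ X + l1') (hcM2' : X + 2*l1' + l2' ≤ b' + 2*l1) : False := by
  have hrel : ∀ j, X-t1 ≤ j → j ≤ X → cExt c j = cExt c' (j+1-2*l1+2*l1'-1) := by
    intro j h1 h2
    have hm := mkr (j+1-2*l1) (by omega)
    rw [Gmap_M (by omega) (by omega), Gmap_M (by omega) (by omega)] at hm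
    rw [show j+1-2*l1+2*l1-1 = j by omega] at hm
    exact hm
  rcases (by omega : l1 = l1' ∨ (l1 = 0 ∧ l1' = 1) ∨ (l1 = 1 ∧ l1' = 0)) with hL | hL | hL
  · apply hX
    have := hrel X (by omega) (le_refl X)
    rwa [show X+1-2*l1+2*l1'-1 = X by omega] at this
  · refine LSZpos hb hc1' hc2' ht1 hXn 2 (X-t1) (X-1) (by omega) (by omega) (by omega)
      (by omega) ?_
    intro j h1 h2
    have := hrel j (by omega) (by omega)
    rwa [show j+1-2*l1+2*l1'-1 = j+2 by omega] at this
  · refine LSZneg hb hc1 hc2 ht1 hXn 2 (X-t1) X (by omega) (by omega) (by omega)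
      (by omega) (by omega) ?_
    intro j h1 h2
    have := hrel j h1 h2
    rwa [show j+1-2*l1+2*l1'-1 = j-2 by omega] at this

/-- read with c-Middle covering the window and c'-Suffix covering its m-window. -/
lemma ANMS (hb : ∀ j, j < X → cExt c j = cExt c' j) (hX : cExt c X ≠ cExt c' X)
    (hc1 : LLe c 1 t1) (hc2 : LLe c 2 t1) (hc1' : LLe c' 1 t1) (hc2' : LLe c' 2 t1)
    (ht1 : 2 ≤ t1) (hXw : t1 + 5 ≤ X) (hXn : X + t1 + 3 ≤ n)
    (hl1 : l1 ≤ 1) (hl2 : l2 ≤ 1) (hl1' : l1' ≤ 1) (hl2' : l2' ≤ 1)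
    (hLam : l1 + l2 = l1' + l2')
    (a b a' b' : ℕ) (ha'b' : a' < b')
    (mkr : ∀ m, m ≤ X + 3 → cExt c (Gmap a b l1 l2 m) = cExt c' (Gmap a' b' l1' l2' m))
    (hcM1 : a + l1 + t1 ≤ X) (hcM2 : X + l2 ≤ b)
    (hcS' : b' + 2*l1 + t1 + 1 ≤ X + l2' + 2*l1') : False := by
  have hrel : ∀ j, X-t1 ≤ j → j ≤ X →
      cExt c j = cExt c' (j+1-2*l1+2*l1'+2*l2'-2) := by
    intro j h1 h2
    have hm := mkr (j+1-2*l1) (by omega)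
    rw [Gmap_M (by omega) (by omega), Gmap_S (by omega) (by omega)] at hm
    rw [show j+1-2*l1+2*l1-1 = j by omega] at hm
    exact hm
  rcases (by omega : l2 = 0 ∨ l2 = 1) with hL | hL
  · refine LSZneg hb hc1 hc2 ht1 hXn 1 (X-t1) X (by omega) (by omega) (by omega)
      (by omega) (by omega) ?_
    intro j h1 h2
    have := hrel j h1 h2
    rwa [show j+1-2*l1+2*l1'+2*l2'-2 = j-1 by omega] at this
  · refine LSZpos hb hc1' hc2' ht1 hXn 1 (X-t1) (X-1) (by omega) (by omega) (by omega)
      (by omega) ?_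
    intro j h1 h2
    have := hrel j (by omega) (by omega)
    rwa [show j+1-2*l1+2*l1'+2*l2'-2 = j+1 by omega] at this

/-- read with c-Suffix covering the window and c'-Middle covering its m-window. -/
lemma ANSM (hb : ∀ j, j < X → cExt c j = cExt c' j) (hX : cExt c X ≠ cExt c' X)
    (hc1 : LLe c 1 t1) (hc2 : LLe c 2 t1) (hc1' : LLe c' 1 t1) (hc2' : LLe c' 2 t1)
    (ht1 : 2 ≤ t1) (hXw : t1 + 5 ≤ X) (hXn : X + t1 + 3 ≤ n)
    (hl1 : l1 ≤ 1) (hl2 : l2 ≤ 1) (hl1' : l1' ≤ 1) (hl2' : l2' ≤ 1)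
    (hLam : l1 + l2 = l1' + l2')
    (a b a' b' : ℕ) (hab : a < b)
    (mkr : ∀ m, m ≤ X + 3 → cExt c (Gmap a b l1 l2 m) = cExt c' (Gmap a' b' l1' l2' m))
    (hcS : b + l2 + t1 ≤ X)
    (hcM1' : a' + 2*l1 + 2*l2 + t1 ≤ X + 1 + l1')
    (hcM2' : X + 2 + 2*l1' + l2' ≤ b' + 1 + 2*l1 + 2*l2) : False := by
  have hrel : ∀ j, X-t1 ≤ j → j ≤ X →
      cExt c j = cExt c' (j+2-2*l1-2*l2+2*l1'-1) := by
    intro j h1 h2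
    have hm := mkr (j+2-2*l1-2*l2) (by omega)
    rw [Gmap_S (by omega) (by omega), Gmap_M (by omega) (by omega)] at hm
    rw [show j+2-2*l1-2*l2+2*l1+2*l2-2 = j by omega] at hm
    exact hm
  rcases (by omega : l2' = 0 ∨ l2' = 1) with hL | hL
  · refine LSZpos hb hc1' hc2' ht1 hXn 1 (X-t1) (X-1) (by omega) (by omega) (by omega)
      (by omega) ?_
    intro j h1 h2
    have := hrel j (by omega) (by omega)
    rwa [show j+2-2*l1-2*l2+2*l1'-1 = j+1 by omega] at this
  · refine LSZneg hb hc1 hc2 ht1 hXn 1 (X-t1) X (by omega) (by omega) (by omega)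
      (by omega) (by omega) ?_
    intro j h1 h2
    have := hrel j h1 h2
    rwa [show j+2-2*l1-2*l2+2*l1'-1 = j-1 by omega] at this

/-- strict zone below `X` : c-Middle against c'-Prefix on `[p,q]`. -/
lemma SZMP (hb : ∀ j, j < X → cExt c j = cExt c' j)
    (hc1 : LLe c 1 t1) (hc2 : LLe c 2 t1) (hc1' : LLe c' 1 t1) (hc2' : LLe c' 2 t1)
    (ht1 : 2 ≤ t1) (hXw : t1 + 5 ≤ X) (hXn : X + t1 + 3 ≤ n)
    (hl1 : l1 ≤ 1) (hl2 : l2 ≤ 1) (hl1' : l1' ≤ 1) (hl2' : l2' ≤ 1)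
    (a b a' b' : ℕ) (p q : ℕ)
    (mkr : ∀ m, m ≤ X + 3 → cExt c (Gmap a b l1 l2 m) = cExt c' (Gmap a' b' l1' l2' m))
    (hp1 : a + l1 ≤ p) (hq1 : q + l2 ≤ b) (hq2 : q < X)
    (hcP : q + 1 + l1' ≤ a' + 2*l1) (hcnt : p + t1 ≤ q + 1) : False := by
  rcases (by omega : l1 = 0 ∨ l1 = 1) with rfl | rfl
  · refine LSZpos hb hc1' hc2' ht1 hXn 1 p q (by omega) (by omega) (by omega)
      (by omega) ?_
    intro j h1 h2
    have hm := mkr (j+1) (by omega)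
    rw [Gmap_M (by omega) (by omega), Gmap_P (by omega)] at hm
    rw [show j+1+2*0-1 = j by omega] at hm
    exact hm
  · refine LSZneg hb hc1 hc2 ht1 hXn 1 p q (by omega) (by omega) (by omega)
      (by omega) (by omega) ?_
    intro j h1 h2
    have hm := mkr (j-1) (by omega)
    rw [Gmap_M (by omega) (by omega), Gmap_P (by omega)] at hm
    rw [show j-1+2*1-1 = j by omega] at hm
    exact hm

end Regions

lemma core {n t1 t A B A' B' l1 l2 l1' l2' : ℕ} {c c' : Fin n → ZMod 2}
    (ht1 : 2 ≤ t1) (ht : t = 3*t1 - 2)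
    (hl1 : l1 ≤ 1) (hl2 : l2 ≤ 1) (hl1' : l1' ≤ 1) (hl2' : l2' ≤ 1)
    (hLam : l1 + l2 = l1' + l2')
    (hAB : A < B) (hBn : B + 2*t + 1 ≤ n)
    (hA'B' : A' < B') (hB'n : B' + 2*t + 1 ≤ n)
    (hAA' : A ≤ A')
    (hc1 : LLe c 1 t1) (hc2 : LLe c 2 t1) (hc1' : LLe c' 1 t1) (hc2' : LLe c' 2 t1)
    (mk : ∀ k, k ≤ 2 → ∀ m, m < n + 2 - 2*l1 - 2*l2 →
      cExt c (Gmap (A + k*t) (B + k*t) l1 l2 m)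
        = cExt c' (Gmap (A' + k*t) (B' + k*t) l1' l2' m)) :
    ∀ j, cExt c j = cExt c' j := by
  by_contra hcon
  push_neg at hcon
  obtain ⟨jw, hjw⟩ := hcon
  classical
  have hex : ∃ j, cExt c j ≠ cExt c' j := ⟨jw, hjw⟩
  set X := Nat.find hex with hXdef
  have hX : cExt c X ≠ cExt c' X := Nat.find_spec hex
  have hb : ∀ j, j < X → cExt c j = cExt c' j := by
    intro j hj
    have h2 := Nat.find_min hex hj
    exact not_not.mp h2
  have hXn0 : X < n := by
    by_contra hh
    push_neg at hh
    apply hX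
    unfold cExt
    rw [dif_neg (by omega), dif_neg (by omega)]
  have hsuf : ∀ j, B + l2 ≤ j → B' + l2' ≤ j → j < n → cExt c j = cExt c' j := by
    intro j h1 h2 h3
    have hm := mk 0 (by omega) (j + 2 - 2*l1 - 2*l2) (by omega)
    rw [Gmap_S (by omega) (by omega), Gmap_S (by omega) (by omega)] at hm
    rw [show j+2-2*l1-2*l2+2*l1+2*l2-2 = j by omega,
        show j+2-2*l1-2*l2+2*l1'+2*l2'-2 = j by omega] at hm
    exact hm
  have hXb : ¬(B + l2 ≤ X ∧ B' + l2' ≤ X) := fun hh => hX (hsuf X hh.1 hh.2 hXn0)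
  have hpre : ∀ j, j + l1 ≤ A + 2*t → j + l1' ≤ A' + 2*t → cExt c j = cExt c' j := by
    intro j h1 h2
    have hm := mk 2 (by omega) j (by omega)
    rw [Gmap_P (by omega), Gmap_P (by omega)] at hm
    exact hm
  have hXa : A + 2*t ≤ X + l1 := by
    by_contra hh
    push_neg at hh
    exact hX (hpre X (by omega) (by omega))
  have hXor : X ≤ B ∨ X ≤ B' := by
    by_contra hh
    push_neg at hh
    exact hXb ⟨by omega, by omega⟩
  have hXbound : X + 2*t + 1 ≤ n := by omega
  have hXn : X + t1 + 3 ≤ n := by omega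
  have hXw : t1 + 5 ≤ X := by omega
  have mkr0 : ∀ m, m ≤ X+3 →
      cExt c (Gmap A B l1 l2 m) = cExt c' (Gmap A' B' l1' l2' m) := by
    intro m hm
    have := mk 0 (by omega) m (by omega)
    simpa using this
  have mkr1 : ∀ m, m ≤ X+3 →
      cExt c (Gmap (A+t) (B+t) l1 l2 m) = cExt c' (Gmap (A'+t) (B'+t) l1' l2' m) := by
    intro m hm
    have := mk 1 (by omega) m (by omega)
    simpa using this
  have mkr2 : ∀ m, m ≤ X+3 →
      cExt c (Gmap (A+2*t) (B+2*t) l1 l2 m) = cExt c' (Gmap (A'+2*t) (B'+2*t) l1' l2' m) := by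
    intro m hm
    exact mk 2 (by omega) m (by omega)
  by_cases h1 : X + l2 ≤ B
  · -- CASE 1 : X in c-Middle of read 0
    by_cases h11 : X + 1 + l1' ≤ A' + 2*l1
    · exact ANMP hb hX hc1 hc2 hc1' hc2' ht1 hXw hXn hl1 hl2 hl1' hl2'
        A B A' B' mkr0 (by omega) (by omega) h11
    by_cases hAlow : A' + 2*l1 + t1 ≤ X + l1'
    · by_cases h12 : X + l2' + 2*l1' ≤ B' + 2*l1
      · exact ANMM hb hX hc1 hc2 hc1' hc2' ht1 hXw hXn hl1 hl2 hl1' hl2'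
          A B A' B' mkr0 (by omega) (by omega) (by omega) (by omega)
      by_cases h131 : B' + 2*l1 + t1 + 1 ≤ X + l2' + 2*l1'
      · exact ANMS hb hX hc1 hc2 hc1' hc2' ht1 hXw hXn hl1 hl2 hl1' hl2' hLam
          A B A' B' hA'B' mkr0 (by omega) (by omega) (by omega)
      -- H2 : B' pinned near X, A' below window
      by_cases h2a : X + 1 + l1' ≤ A' + t + 2*l1
      · exact ANMP hb hX hc1 hc2 hc1' hc2' ht1 hXw hXn hl1 hl2 hl1' hl2'
          (A+t) (B+t) (A'+t) (B'+t) mkr1 (by omega) (by omega) h2a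
      by_cases h2b : A' + t + 2*l1 + t1 ≤ X + l1'
      · exact ANMM hb hX hc1 hc2 hc1' hc2' ht1 hXw hXn hl1 hl2 hl1' hl2'
          (A+t) (B+t) (A'+t) (B'+t) mkr1 (by omega) (by omega) (by omega) (by omega)
      · -- H2.c : strict zone, read 1, c-M vs c'-P
        have hmin : A + 2*t + 1 ≤ X + l1 := by
          by_contra hh
          push_neg at hh
          exact hX (hpre X (by omega) (by omega))
        exact SZMP hb hc1 hc2 hc1' hc2' ht1 hXw hXn hl1 hl2 hl1' hl2'
          (A+t) (B+t) (A'+t) (B'+t) (A+t+l1) (A'+t+2*l1-l1'-1) mkr1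
          (by omega) (by omega) (by omega) (by omega) (by omega)
    · -- A' near/above window : read 1, c-M vs c'-P anchored
      exact ANMP hb hX hc1 hc2 hc1' hc2' ht1 hXw hXn hl1 hl2 hl1' hl2'
        (A+t) (B+t) (A'+t) (B'+t) mkr1 (by omega) (by omega) (by omega)
  · by_cases hc3 : l2 = 1 ∧ X = B
    · -- CASE 3 : the coordinate X is exactly the second deleted position of c in read 0
      obtain ⟨hl21, hXB⟩ := hc3
      by_cases h31 : X + 1 + l1' ≤ A' + t + 2*l1
      · exact ANMP hb hX hc1 hc2 hc1' hc2' ht1 hXw hXn hl1 hl2 hl1' hl2'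
          (A+t) (B+t) (A'+t) (B'+t) mkr1 (by omega) (by omega) h31
      by_cases h34 : A' + t + 2*l1 + t1 ≤ X + l1'
      · -- A' below the window
        by_cases h32 : X + 2*l1' + l2' ≤ B' + t + 2*l1
        · exact ANMM hb hX hc1 hc2 hc1' hc2' ht1 hXw hXn hl1 hl2 hl1' hl2'
            (A+t) (B+t) (A'+t) (B'+t) mkr1 (by omega) (by omega) (by omega) (by omega)
        by_cases h33 : B' + t + 2*l1 + t1 + 1 ≤ X + l2' + 2*l1'
        · exact ANMS hb hX hc1 hc2 hc1' hc2' ht1 hXw hXn hl1 hl2 hl1' hl2' hLam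
            (A+t) (B+t) (A'+t) (B'+t) (by omega) mkr1 (by omega) (by omega) (by omega)
        -- 3.D : B'+t pinned inside the window
        rcases (by omega : (l1 = l1' ∧ l2' = 1) ∨ (l1 = 0 ∧ l1' = 1 ∧ l2' = 0))
          with ⟨hE1, hE2⟩ | ⟨hE1, hE2, hE3⟩
        · -- 3.D-eq : read 0, c-M vs c'-S, anchored (mirrored)
          refine LSZnegR hb hc1' hc2' ht1 hXn 1 (B'+1) X (by omega) (by omega) (le_refl X)
            (by omega) (by omega) ?_
          intro i hi1 hi2
          have hm := mkr0 (i - 2*l1) (by omega)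
          rw [Gmap_M (by omega) (by omega), Gmap_S (by omega) (by omega)] at hm
          rw [show i-2*l1+2*l1-1 = i-1 by omega,
              show i-2*l1+2*l1'+2*l2'-2 = i by omega] at hm
          exact hm
        · -- 3.D-neq : pigeonhole with three runs (read 1)
          have r1 : ∀ j, A+t ≤ j → j ≤ A'+t-2 → cExt c' j = cExt c' (j+1) := by
            intro j hj1 hj2
            have hm := mkr1 (j+1) (by omega)
            rw [Gmap_M (by omega) (by omega), Gmap_P (by omega)] at hm
            rw [show j+1+2*l1-1 = j by omega] at hm
            rw [← hb j (by omega)]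
            exact hm
          have rM : ∀ i, A'+t-1 ≤ i → A+t ≤ i → i ≤ B'+t-2 → cExt c' i = cExt c' (i+2) := by
            intro i hi1 hi1b hi2
            have hm := mkr1 (i+1) (by omega)
            rw [Gmap_M (q1 := A+t) (q2 := B+t) (by omega) (by omega),
                Gmap_M (q1 := A'+t) (q2 := B'+t) (by omega) (by omega)] at hm
            rw [show i+1+2*l1-1 = i by omega, show i+1+2*l1'-1 = i+2 by omega] at hm
            rw [← hb i (by omega)]
            exact hm
          have r2 : ∀ i, B'+t-1 ≤ i → i ≤ X-1 → cExt c' i = cExt c' (i+1) := by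
            intro i hi1 hi2
            have hm := mkr1 (i+1) (by omega)
            rw [Gmap_M (by omega) (by omega), Gmap_S (by omega) (by omega)] at hm
            rw [show i+1+2*l1-1 = i by omega,
                show i+1+2*l1'+2*l2'-2 = i+1 by omega] at hm
            rw [← hb i (by omega)]
            exact hm
          by_cases hcnt1 : A + t1 + 1 ≤ A'
          · exact run1_false hc1' (A+t) (by omega)
              (fun i hi1 hi2 => r1 i hi1 (by omega))
          by_cases hcntM : max (A'+t-1) (A+t) + t1 ≤ B' + t
          · exact run2_false hc2' (max (A'+t-1) (A+t)) ht1 (by omega)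
              (fun i hi1 hi2 => rM i (by omega) (by omega) (by omega))
          by_cases hcnt2 : B' + t - 1 + t1 ≤ X
          · exact run1_false hc1' (B'+t-1) (by omega)
              (fun i hi1 hi2 => r2 i hi1 (by omega))
          · have hmin : A + 2*t + 1 ≤ X + l1 := by
              by_contra hh
              push_neg at hh
              exact hX (hpre X (by omega) (by omega))
            omega
      · -- 3.C : A' + t pinned near the window
        by_cases h341 : A + 2*t + l1 + t1 ≤ X
        · exact ANMP hb hX hc1 hc2 hc1' hc2' ht1 hXw hXn hl1 hl2 hl1' hl2'
            (A+2*t) (B+2*t) (A'+2*t) (B'+2*t) mkr2 (by omega) (by omega) (by omega)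
        by_cases h342 : X + l1 ≤ A + 2*t
        · exact hX (hpre X h342 (by omega))
        · -- 3.C.ii : strict zone, read 0, c-M vs c'-P
          exact SZMP hb hc1 hc2 hc1' hc2' ht1 hXw hXn hl1 hl2 hl1' hl2'
            A B A' B' (A+l1) (A'+2*l1-l1'-1) mkr0
            (by omega) (by omega) (by omega) (by omega) (by omega)
    · -- CASE 2 : X at/after the second error of c in read 0
      have hX2 : B + l2 ≤ X := by
        rcases (by omega : l2 = 0 ∨ l2 = 1) with hh | hh
        · omega
        · by_cases hXB : X = B
          · exact absurd ⟨hh, hXB⟩ hc3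
          · omega
      have hB' : X + 1 ≤ B' + l2' := by
        by_contra hh
        push_neg at hh
        exact hXb ⟨hX2, by omega⟩
      by_cases h21 : B + l2 + t1 ≤ X
      · -- 2.I : c-S covers the window in read 0
        by_cases h211 : X + 2 + l1' ≤ A' + 2*l1 + 2*l2
        · exact ANSP hb hX hc1 hc2 hc1' hc2' ht1 hXw hXn hl1 hl2 hl1' hl2'
            A B A' B' hAB mkr0 (by omega) h211
        by_cases h212 : A' + 2*l1 + 2*l2 + t1 ≤ X + 1 + l1'
        · exact ANSM hb hX hc1 hc2 hc1' hc2' ht1 hXw hXn hl1 hl2 hl1' hl2' hLam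
            A B A' B' hAB mkr0 (by omega) (by omega) (by omega)
        -- A' pinned near the window
        by_cases h2Ia : B + t + l2 + t1 ≤ X
        · exact ANSP hb hX hc1 hc2 hc1' hc2' ht1 hXw hXn hl1 hl2 hl1' hl2'
            (A+t) (B+t) (A'+t) (B'+t) (by omega) mkr1 (by omega) (by omega)
        by_cases h2Ib : X + l2 ≤ B + t
        · exact ANMP hb hX hc1 hc2 hc1' hc2' ht1 hXw hXn hl1 hl2 hl1' hl2'
            (A+t) (B+t) (A'+t) (B'+t) mkr1 (by omega) (by omega) (by omega)
        -- b_1 pinned : read-2 trichotomy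
        by_cases h2Ic : A + 2*t + l1 + t1 ≤ X
        · exact ANMP hb hX hc1 hc2 hc1' hc2' ht1 hXw hXn hl1 hl2 hl1' hl2'
            (A+2*t) (B+2*t) (A'+2*t) (B'+2*t) mkr2 (by omega) (by omega) (by omega)
        by_cases h2Id : X + l1 ≤ A + 2*t
        · exact hX (hpre X h2Id (by omega))
        rcases (by omega : l1 + l2 ≤ 1 ∨ (l1 = 1 ∧ l2 = 1)) with hLc | ⟨hL1, hL2⟩
        · -- strict zone read 1, c-M vs c'-P
          exact SZMP hb hc1 hc2 hc1' hc2' ht1 hXw hXn hl1 hl2 hl1' hl2'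
            (A+t) (B+t) (A'+t) (B'+t) (A+t+l1) (B+t-l2) mkr1
            (by omega) (by omega) (by omega) (by omega) (by omega)
        · -- all-deletions : strict zone read 0, c-S vs c'-P, shift -2
          have hl1'1 : l1' = 1 := by omega
          have hl2'1 : l2' = 1 := by omega
          refine LSZneg hb hc1 hc2 ht1 hXn 2 (B+2) (A'+1) (by omega) (by omega)
            (by omega) (by omega) (by omega) ?_
          intro j hj1 hj2
          have hm := mkr0 (j-2) (by omega)
          rw [Gmap_S (by omega) (by omega), Gmap_P (by omega)] at hm
          rw [show j-2+2*l1+2*l2-2 = j by omega] at hm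
          exact hm
      · -- 2.II : b_0 pinned inside the window ; use read 1 (c-M covers)
        by_cases h221 : X + 1 + l1' ≤ A' + t + 2*l1
        · exact ANMP hb hX hc1 hc2 hc1' hc2' ht1 hXw hXn hl1 hl2 hl1' hl2'
            (A+t) (B+t) (A'+t) (B'+t) mkr1 (by omega) (by omega) h221
        by_cases h222 : A' + t + 2*l1 + t1 ≤ X + l1'
        · exact ANMM hb hX hc1 hc2 hc1' hc2' ht1 hXw hXn hl1 hl2 hl1' hl2'
            (A+t) (B+t) (A'+t) (B'+t) mkr1 (by omega) (by omega) (by omega) (by omega)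
        by_cases h223 : A + 2*t + l1 + t1 ≤ X
        · exact ANMP hb hX hc1 hc2 hc1' hc2' ht1 hXw hXn hl1 hl2 hl1' hl2'
            (A+2*t) (B+2*t) (A'+2*t) (B'+2*t) mkr2 (by omega) (by omega) (by omega)
        by_cases h224 : X + l1 ≤ A + 2*t
        · exact hX (hpre X h224 (by omega))
        · -- 2.II.C.ii : strict zone read 0, c-M vs c'-P
          exact SZMP hb hc1 hc2 hc1' hc2' ht1 hXw hXn hl1 hl2 hl1' hl2'
            A B A' B' (A+l1) (A'+2*l1-l1'-1) mkr0
            (by omega) (by omega) (by omega) (by omega) (by omega)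

lemma bl_le (b : Bool) : bl b ≤ 1 := by cases b <;> simp [bl]

/-- Theorem 11, part 3: `C_3(n,≤2,t₁)` is a three-head
two-position-error-correcting code when the distance between adjacent heads is
`t = 3t₁ - 2`. -/
theorem stmt18 {n t1 t : ℕ} (ht1 : 2 ≤ t1) (ht : t = 3 * t1 - 2)
    (c c' : Fin n → ZMod 2) (hc : c ∈ C3set n 2 t1) (hc' : c' ∈ C3set n 2 t1)
    (i1 i2 i1' i2' : ℕ)
    (hi1 : 1 ≤ i1) (h12 : i1 < i2) (h2n : i2 + 2 * t ≤ n)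
    (hi1' : 1 ≤ i1') (h12' : i1' < i2') (h2n' : i2' + 2 * t ≤ n)
    (e1 e2 e1' e2' : Bool)
    (hreads : ∀ k : ℕ, k ≤ 2 →
      applyTwoErrors c (i1 + k * t) (i2 + k * t) e1 e2 =
      applyTwoErrors c' (i1' + k * t) (i2' + k * t) e1' e2') :
    c = c' := by
  have hbl1 := bl_le e1
  have hbl2 := bl_le e2
  have hbl1' := bl_le e1'
  have hbl2' := bl_le e2'
  have ht4 : 4 ≤ t := by omega
  have hmaps : ∀ k, k ≤ 2 →
      (List.range (n + 2 - 2*bl e1 - 2*bl e2)).map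
        (fun m => cExt c (Gmap (i1+k*t-1) (i2+k*t-1) (bl e1) (bl e2) m))
      = (List.range (n + 2 - 2*bl e1' - 2*bl e2')).map
        (fun m => cExt c' (Gmap (i1'+k*t-1) (i2'+k*t-1) (bl e1') (bl e2') m)) := by
    intro k hk
    have h := hreads k hk
    rwa [applyTwoErrors_eq c _ _ _ _ (by omega) (by omega) (by nlinarith [hk, h2n] ),
         applyTwoErrors_eq c' _ _ _ _ (by omega) (by omega) (by nlinarith [hk, h2n'])] at h
  have hLam : bl e1 + bl e2 = bl e1' + bl e2' := by
    have hlen := congrArg List.length (hmaps 0 (by omega))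
    simp only [List.length_map, List.length_range] at hlen
    omega
  have hmk : ∀ k, k ≤ 2 → ∀ m, m < n + 2 - 2*bl e1 - 2*bl e2 →
      cExt c (Gmap (i1-1+k*t) (i2-1+k*t) (bl e1) (bl e2) m)
        = cExt c' (Gmap (i1'-1+k*t) (i2'-1+k*t) (bl e1') (bl e2') m) := by
    intro k hk m hm
    have h := congrArg (fun l => l[m]?) (hmaps k hk)
    have hm' : m < n + 2 - 2*bl e1' - 2*bl e2' := by omega
    simp only [List.getElem?_map, List.getElem?_range, hm, hm', if_pos] at h
    rw [show i1-1+k*t = i1+k*t-1 by omega, show i2-1+k*t = i2+k*t-1 by omega,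
        show i1'-1+k*t = i1'+k*t-1 by omega, show i2'-1+k*t = i2'+k*t-1 by omega]
    exact Option.some.inj h
  have hc1 : LLe c 1 t1 := hc 1 (le_refl 1) (by omega)
  have hc2 : LLe c 2 t1 := hc 2 (by omega) (le_refl 2)
  have hc1' : LLe c' 1 t1 := hc' 1 (le_refl 1) (by omega)
  have hc2' : LLe c' 2 t1 := hc' 2 (by omega) (le_refl 2)
  have key : ∀ j, cExt c j = cExt c' j := by
    rcases le_total (i1-1) (i1'-1) with hle | hle
    · exact core ht1 ht hbl1 hbl2 hbl1' hbl2' hLam (by omega) (by omega) (by omega)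
        (by omega) hle hc1 hc2 hc1' hc2' hmk
    · intro j
      refine (core (A := i1'-1) (B := i2'-1) (A' := i1-1) (B' := i2-1)
        ht1 ht hbl1' hbl2' hbl1 hbl2 hLam.symm (by omega) (by omega) (by omega)
        (by omega) hle hc1' hc2' hc1 hc2 (fun k hk m hm => ?_) j).symm
      exact (hmk k hk m (by omega)).symm
  funext i
  have h := key i.val
  unfold cExt at h
  rw [dif_pos i.isLt, dif_pos i.isLt] at h
  exact h
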